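/- arXiv:1808.09898 — 3 statements merged into one kernel-verified Lean document; each statement's English description precedes it below -/
import Mathlib

section
/- Properties of the L-distance: Let X be a metric space with a partial order, and define d_L(x,y) := sup { f(x) − f(y) : f : X → ℝ monotone and 1-Lipschitz }. Then: (1) if x ≤ y then d_L(x,y) = 0; (2) d_L satisfies the triangle inequality d_L(x,z) ≤ d_L(x,y) + d_L(y,z); (3) 0 ≤ d_L(x,y) ≤ d(x,y) for all x,y; (4) d_L is jointly lower semicontinuous as a function X × X → ℝ; (5) X is L-ordered if and only if d_L(x,y) = 0 implies x ≤ y for all x,y ∈ X. -/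
/-! Each function `(x, y) ↦ f x - f y` with `f` monotone and 1-Lipschitz is continuous, bounded
by `dist x y`, and `≤ 0` when `x ≤ y`; the bounds and the vanishing on ordered pairs pass to the
supremum, the triangle inequality holds for each `f` separately, and a supremum of continuous
functions is lower semicontinuous. Moreover `dL x y = 0` says exactly that `f x ≤ f y` for every
such `f`, so L-orderedness is the statement that this forces `x ≤ y`. -/

/-- The L-distance on an ordered metric space: the supremum of `f x − f y` over all
monotone 1-Lipschitz functions `f : X → ℝ`. -/
noncomputable def dL {X : Type*} [MetricSpace X] [PartialOrder X] (x y : X) : ℝ :=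
  sSup {t : ℝ | ∃ f : X → ℝ, Monotone f ∧ LipschitzWith 1 f ∧ t = f x - f y}

theorem LipschitzWith.sub_le_dist {X : Type*} [PseudoMetricSpace X] {f : X → ℝ}
    (hf : LipschitzWith 1 f) (x y : X) : f x - f y ≤ dist x y :=
  (Real.sub_le_dist _ _).trans (by simpa using hf.dist_le_mul x y)

section LDistance

variable {X : Type*} [MetricSpace X] [PartialOrder X]

variable (X) in
def monotoneLipschitzOne : Set (X → ℝ) := {f | Monotone f ∧ LipschitzWith 1 f}

instance : Nonempty (monotoneLipschitzOne X) :=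
  ⟨⟨fun _ => 0, monotone_const, LipschitzWith.const' 0⟩⟩

theorem dL_eq_iSup (x y : X) : dL x y = ⨆ f : monotoneLipschitzOne X, f.1 x - f.1 y := by
  rw [dL, ← sSup_range]
  congr 1
  ext t
  simp [monotoneLipschitzOne, eq_comm, and_assoc]

theorem bddAbove_range_sub_monotoneLipschitzOne (x y : X) :
    BddAbove (Set.range fun f : monotoneLipschitzOne X => f.1 x - f.1 y) :=
  ⟨dist x y, by rintro _ ⟨f, rfl⟩; exact f.2.2.sub_le_dist x y⟩

theorem le_dL {f : X → ℝ} (hm : Monotone f) (hl : LipschitzWith 1 f) (x y : X) :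
    f x - f y ≤ dL x y := by
  rw [dL_eq_iSup]
  exact le_ciSup (f := fun f : monotoneLipschitzOne X => f.1 x - f.1 y)
    (bddAbove_range_sub_monotoneLipschitzOne x y) ⟨f, hm, hl⟩

theorem dL_le {x y : X} {c : ℝ}
    (h : ∀ f : X → ℝ, Monotone f → LipschitzWith 1 f → f x - f y ≤ c) : dL x y ≤ c := by
  rw [dL_eq_iSup]
  exact ciSup_le fun f => h f.1 f.2.1 f.2.2

theorem dL_nonneg (x y : X) : 0 ≤ dL x y := by
  simpa using le_dL monotone_const (LipschitzWith.const' (0 : ℝ)) x y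

theorem dL_le_dist (x y : X) : dL x y ≤ dist x y :=
  dL_le fun _ _ hl => hl.sub_le_dist x y

theorem dL_triangle (x y z : X) : dL x z ≤ dL x y + dL y z :=
  dL_le fun f hm hl => by linarith [le_dL hm hl x y, le_dL hm hl y z]

theorem dL_eq_zero_iff {x y : X} :
    dL x y = 0 ↔ ∀ f : X → ℝ, Monotone f → LipschitzWith 1 f → f x ≤ f y := by
  refine ⟨fun h f hm hl => ?_, fun h => ?_⟩
  · linarith [le_dL hm hl x y]
  · exact (dL_le fun f hm hl => by linarith [h f hm hl]).antisymm (dL_nonneg x y)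

theorem dL_eq_zero_of_le {x y : X} (hxy : x ≤ y) : dL x y = 0 :=
  dL_eq_zero_iff.2 fun _ hm _ => hm hxy

theorem lowerSemicontinuous_dL : LowerSemicontinuous fun z : X × X => dL z.1 z.2 := by
  simp only [dL_eq_iSup]
  refine lowerSemicontinuous_ciSup (fun z => bddAbove_range_sub_monotoneLipschitzOne z.1 z.2)
    fun f => Continuous.lowerSemicontinuous ?_
  have hf := f.2.2.continuous
  fun_prop

end LDistance

/-- Properties of the L-distance: it vanishes on ordered pairs, satisfies the triangle
inequality, is nonnegative and bounded above by the metric, is jointly lower semicontinuous,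
and its vanishing detects the order exactly when `X` is L-ordered. -/
theorem dL_properties {X : Type*} [MetricSpace X] [PartialOrder X] :
    (∀ x y : X, x ≤ y → dL x y = 0) ∧
    (∀ x y z : X, dL x z ≤ dL x y + dL y z) ∧
    (∀ x y : X, 0 ≤ dL x y ∧ dL x y ≤ dist x y) ∧
    LowerSemicontinuous (fun z : X × X => dL z.1 z.2) ∧
    ((∀ x y : X, x ≤ y ↔ ∀ f : X → ℝ, Monotone f → LipschitzWith 1 f → f x ≤ f y) ↔
      (∀ x y : X, dL x y = 0 → x ≤ y)) := by
  refine ⟨fun _ _ => dL_eq_zero_of_le, dL_triangle, fun x y => ⟨dL_nonneg x y, dL_le_dist x y⟩,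
    lowerSemicontinuous_dL, ?_⟩
  simp only [dL_eq_zero_iff]
  exact ⟨fun h x y => (h x y).2, fun h x y => ⟨fun hxy _ hm _ => hm hxy, h x y⟩⟩
end

section
/- Let X be an ordered metric space (partial order with closed graph), let n ≥ 1, and let x, y : Fin n → X. Then the empirical distribution i_n(x) is below i_n(y) in the stochastic order (i.e. there is a coupling of i_n(x) and i_n(y) supported on {(a,b) : a ≤ b}) if and only if there exists a permutation σ of Fin n such that x(i) ≤ y(σ(i)) for all i ∈ Fin n. -/
open MeasureTheory

/-- A coupling of two Borel probability measures `p` and `q` on `Z` is a measure on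
`Z × Z` whose marginals (pushforwards along the projections) are `p` and `q`. -/
def IsCoupling {Z : Type*} [MeasurableSpace Z] (r : Measure (Z × Z)) (p q : Measure Z) : Prop :=
  r.map Prod.fst = p ∧ r.map Prod.snd = q

/-- The empirical distribution of a tuple `x : Fin n → X`: the uniform average
`(1/n) ∑ i, δ_{x i}` of Dirac measures. -/
noncomputable def empDist {X : Type*} [MeasurableSpace X] {n : ℕ} (x : Fin n → X) :
    Measure X :=
  ((n : ENNReal))⁻¹ • ∑ i : Fin n, Measure.dirac (x i)

lemma empDist_apply {X : Type*} [MeasurableSpace X] {n : ℕ} (x : Fin n → X)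
    {A : Set X} (hA : MeasurableSet A) [DecidablePred (fun i => x i ∈ A)] :
    empDist x A = (n : ENNReal)⁻¹ * (Finset.univ.filter (fun i => x i ∈ A)).card := by
  simp only [empDist, Measure.smul_apply, Measure.finset_sum_apply, smul_eq_mul,
    Measure.dirac_apply' _ hA, Set.indicator_apply, Pi.one_apply]
  congr 1
  rw [Finset.sum_boole]

/-- On an ordered metric space (closed partial order), the empirical distributions of two
`n`-tuples are in the stochastic order iff the tuples can be matched by a permutation:
`i_n(x) ≤ i_n(y)` iff there is `σ ∈ S_n` with `x i ≤ y (σ i)` for all `i`. -/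
theorem empirical_stochastic_order_iff_exists_perm
    {X : Type*} [MetricSpace X] [PartialOrder X] [MeasurableSpace X] [BorelSpace X]
    (hcl : IsClosed {z : X × X | z.1 ≤ z.2})
    {n : ℕ} (hn : 0 < n) (x y : Fin n → X) :
    (∃ r : Measure (X × X), IsCoupling r (empDist x) (empDist y) ∧
        r {z : X × X | z.1 ≤ z.2}ᶜ = 0) ↔
      ∃ σ : Equiv.Perm (Fin n), ∀ i : Fin n, x i ≤ y (σ i) := by
  classical
  constructor
  · rintro ⟨r, ⟨hfst, hsnd⟩, hsupp⟩
    set t : Fin n → Finset (Fin n) := fun i => Finset.univ.filter (fun j => x i ≤ y j) with ht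
    have hall : ∀ s : Finset (Fin n), s.card ≤ (s.biUnion t).card := by
      intro s
      set E : Set X := ↑(s.image x) with hE
      have hEm : MeasurableSet E := (s.image x).finite_toSet.measurableSet
      set D : Set X := {b | ∃ i ∈ s, x i ≤ b} with hD
      have hDm : MeasurableSet D := by
        have hDeq : D = ⋃ i ∈ s, {b | x i ≤ b} := by
          ext b; simp [hD]
        rw [hDeq]
        exact MeasurableSet.biUnion s.countable_toSet fun i _ =>
          (hcl.preimage (Continuous.prodMk_right (x i))).measurableSet
      have h1 : r (Prod.fst ⁻¹' E) = empDist x E := by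
        rw [← hfst, Measure.map_apply measurable_fst hEm]
      have h2 : r (Prod.snd ⁻¹' D) = empDist y D := by
        rw [← hsnd, Measure.map_apply measurable_snd hDm]
      have hsub : Prod.fst ⁻¹' E ⊆ (Prod.snd ⁻¹' D) ∪ {z : X × X | z.1 ≤ z.2}ᶜ := by
        rintro ⟨a, b⟩ ha
        by_cases hab : a ≤ b
        · left
          simp only [Set.mem_preimage, hE, Finset.coe_image, Set.mem_image,
            Finset.mem_coe] at ha
          obtain ⟨i, hi, hxi⟩ := ha
          exact ⟨i, hi, hxi ▸ hab⟩
        · exact Or.inr hab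
      have hle : empDist x E ≤ empDist y D := by
        rw [← h1, ← h2]
        calc r (Prod.fst ⁻¹' E) ≤ r ((Prod.snd ⁻¹' D) ∪ {z : X × X | z.1 ≤ z.2}ᶜ) :=
              measure_mono hsub
          _ ≤ r (Prod.snd ⁻¹' D) + r {z : X × X | z.1 ≤ z.2}ᶜ := measure_union_le _ _
          _ = r (Prod.snd ⁻¹' D) := by rw [hsupp, add_zero]
      rw [empDist_apply x hEm, empDist_apply y hDm] at hle
      have hn0 : (n : ENNReal)⁻¹ ≠ 0 := by simp
      have hnt : (n : ENNReal)⁻¹ ≠ ⊤ := by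
        simp [hn.ne']
      have hcard : ((Finset.univ.filter (fun i => x i ∈ E)).card : ENNReal) ≤
          ((Finset.univ.filter (fun j => y j ∈ D)).card : ENNReal) :=
        (ENNReal.mul_le_mul_iff_right hn0 hnt).mp hle
      have hcard' : (Finset.univ.filter (fun i => x i ∈ E)).card ≤
          (Finset.univ.filter (fun j => y j ∈ D)).card := by exact_mod_cast hcard
      have hsE : s ⊆ Finset.univ.filter (fun i => x i ∈ E) := by
        intro i hi
        simp only [Finset.mem_filter, Finset.mem_univ, true_and, hE, Finset.mem_coe]
        exact Finset.mem_image_of_mem x hi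
      have hDt : Finset.univ.filter (fun j => y j ∈ D) = s.biUnion t := by
        ext j
        simp [hD, ht]
      calc s.card ≤ (Finset.univ.filter (fun i => x i ∈ E)).card := Finset.card_le_card hsE
        _ ≤ (Finset.univ.filter (fun j => y j ∈ D)).card := hcard'
        _ = (s.biUnion t).card := by rw [hDt]
    obtain ⟨f, hfinj, hf⟩ := (Finset.all_card_le_biUnion_card_iff_exists_injective t).mp hall
    refine ⟨Equiv.ofBijective f (Finite.injective_iff_bijective.mp hfinj), fun i => ?_⟩
    have := hf i
    simp only [ht, Finset.mem_filter] at this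
    exact this.2
  · rintro ⟨σ, hσ⟩
    refine ⟨(n : ENNReal)⁻¹ • ∑ i : Fin n, Measure.dirac (x i, y (σ i)), ⟨?_, ?_⟩, ?_⟩
    · refine Measure.ext fun A hA => ?_
      rw [Measure.map_apply measurable_fst hA]
      simp only [Measure.smul_apply, Measure.finset_sum_apply, smul_eq_mul,
        Measure.dirac_apply' _ (measurable_fst hA), Measure.dirac_apply' _ hA, empDist,
        Set.indicator_apply, Set.mem_preimage, Pi.one_apply]
    · refine Measure.ext fun A hA => ?_
      rw [Measure.map_apply measurable_snd hA]
      simp only [Measure.smul_apply, Measure.finset_sum_apply, smul_eq_mul,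
        Measure.dirac_apply' _ (measurable_snd hA), Measure.dirac_apply' _ hA, empDist,
        Set.indicator_apply, Set.mem_preimage, Pi.one_apply]
      congr 1
      exact Equiv.sum_comp σ (fun j => if y j ∈ A then (1 : ENNReal) else 0)
    · have h0 : ∀ i : Fin n,
          Measure.dirac (x i, y (σ i)) ({z : X × X | z.1 ≤ z.2}ᶜ) = 0 := by
        intro i
        have hsub : ({z : X × X | z.1 ≤ z.2}ᶜ) ⊆ ({(x i, y (σ i))} : Set (X × X))ᶜ := by
          intro z hz
          simp only [Set.mem_compl_iff, Set.mem_setOf_eq] at hz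
          simp only [Set.mem_compl_iff, Set.mem_singleton_iff]
          rintro rfl
          exact hz (hσ i)
        refine measure_mono_null hsub ?_
        rw [Measure.dirac_apply' _ (measurableSet_singleton _).compl]
        simp
      simp only [Measure.smul_apply, Measure.finset_sum_apply, smul_eq_mul, h0,
        Finset.sum_const_zero, mul_zero]
end

section
/- Strict monotonicity of the barycenter: Let E be an ordered Banach space, and let p and q be Radon Borel probability measures on E with ∫ ‖x‖ dp < ∞ and ∫ ‖x‖ dq < ∞. Suppose there exists a coupling of p and q supported on {(a,b) : a ≤ b}, and suppose the barycenters (Bochner integrals) coincide: ∫ x dp = ∫ x dq. Then p = q. -/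
/-!
Let `r` be the coupling, concentrated on `{(a, b) | b - a ∈ C}`. Then `(a, b) ↦ b - a` is an
integrable `C`-valued function whose integral is the difference of the barycenters, i.e. `0`.
Every continuous functional that is nonnegative on `C` therefore vanishes `r`-a.e. on it. Since `C`
is closed and salient, Hahn–Banach gives for each nonzero `x ∈ C` such a functional positive at `x`,
and Lindelöf's property of the separable set carrying `b - a` reduces these to countably many;
hence `a = b` for `r`-a.e. `(a, b)`, and the two marginals agree. Inner regularity makes the
identity a.e. separably valued, so that the barycenters are genuine Bochner integrals.
-/

open MeasureTheory Set TopologicalSpace Filter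
open scoped ENNReal

theorem IsSigmaCompact.isSeparable {X : Type*} [TopologicalSpace X] [PseudoMetrizableSpace X]
    {s : Set X} (hs : IsSigmaCompact s) : IsSeparable s := by
  obtain ⟨K, hK, rfl⟩ := hs
  exact isSeparable_iUnion.2 fun n => (hK n).isSeparable

theorem TopologicalSpace.IsSeparable.isLindelof {X : Type*} [TopologicalSpace X]
    [PseudoMetrizableSpace X] {s : Set X} (hs : IsSeparable s) : IsLindelof s := by
  have := hs.secondCountableTopology
  exact isLindelof_iff_isLindelof_univ.2 (HereditarilyLindelofSpace.isLindelof _)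

namespace MeasureTheory.Measure

variable {X : Type*} [TopologicalSpace X] [MeasurableSpace X] (μ : Measure X) [IsFiniteMeasure μ]
  [μ.InnerRegular]

theorem exists_isSigmaCompact_ae_mem [BorelSpace X] [R1Space X] :
    ∃ s, IsSigmaCompact s ∧ ∀ᵐ x ∂μ, x ∈ s := by
  have hK (n : ℕ) : ∃ K, IsCompact K ∧ μ Kᶜ < (n : ℝ≥0∞)⁻¹ := by
    obtain ⟨K, -, hK, -, hμK⟩ := MeasurableSet.univ.exists_isCompact_isClosed_sdiff_lt (μ := μ)
      (measure_ne_top μ univ) (ENNReal.inv_ne_zero.2 (ENNReal.natCast_ne_top n))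
    exact ⟨K, hK, by rwa [compl_eq_univ_sdiff]⟩
  choose K hKc hμK using hK
  refine ⟨⋃ n, K n, ⟨K, hKc, rfl⟩, mem_ae_iff.2 (nonpos_iff_eq_zero.1 ?_)⟩
  refine ge_of_tendsto' ENNReal.tendsto_inv_nat_nhds_zero fun n => ?_
  exact (measure_mono (compl_subset_compl.2 (subset_iUnion K n))).trans (hμK n).le

theorem aestronglyMeasurable_id_of_innerRegular [PseudoMetrizableSpace X] [BorelSpace X] :
    AEStronglyMeasurable id μ := by
  obtain ⟨s, hs, hμs⟩ := exists_isSigmaCompact_ae_mem μ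
  exact aestronglyMeasurable_iff_aemeasurable_separable.2
    ⟨aemeasurable_id, s, hs.isSeparable, hμs⟩

end MeasureTheory.Measure

namespace ProperCone

section TopologicalVectorSpace

variable {E : Type*} [TopologicalSpace E] [AddCommGroup E] [IsTopologicalAddGroup E] [Module ℝ E]
  [ContinuousSMul ℝ E] [LocallyConvexSpace ℝ E] (C : ProperCone ℝ E)

theorem exists_dual_pos_of_salient (hC : (C : ConvexCone ℝ E).Salient) {x : E} (hx : x ∈ C)
    (hx0 : x ≠ 0) : ∃ f : StrongDual ℝ E, (∀ y ∈ C, 0 ≤ f y) ∧ 0 < f x := by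
  obtain ⟨f, hfC, hfx⟩ := C.hyperplane_separation_point (hC x hx hx0)
  exact ⟨f, hfC, by simpa using hfx⟩

end TopologicalVectorSpace

variable {E : Type*} [NormedAddCommGroup E] [NormedSpace ℝ E] (C : ProperCone ℝ E)

theorem exists_countable_dual_separating (hC : (C : ConvexCone ℝ E).Salient) {T : Set E}
    (hT : IsSeparable T) :
    ∃ s : Set (StrongDual ℝ E), s.Countable ∧ (∀ f ∈ s, ∀ y ∈ C, 0 ≤ f y) ∧
      ∀ x ∈ C, x ∈ T → (∀ f ∈ s, f x = 0) → x = 0 := by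
  choose! φ hφC hφx using fun x (hx : x ∈ C) (hx0 : x ≠ 0) =>
    C.exists_dual_pos_of_salient hC hx hx0
  have hS : IsLindelof ((T ∩ C) \ {0}) :=
    (hT.mono (sdiff_subset.trans inter_subset_left)).isLindelof
  obtain ⟨b, hbS, hb, hcover⟩ := hS.elim_countable_subcover_image (c := fun x => {y | 0 < φ x y})
    (fun x _ => isOpen_lt continuous_const (φ x).continuous)
    (fun x hx => mem_biUnion hx (hφx x hx.1.2 hx.2))
  refine ⟨φ '' b, hb.image φ, ?_, fun x hxC hxT hx => ?_⟩
  · rintro _ ⟨y, hy, rfl⟩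
    exact hφC y (hbS hy).1.2 (hbS hy).2
  · by_contra hx0
    obtain ⟨y, hy, hxy⟩ := mem_iUnion₂.1 (hcover ⟨⟨hxT, hxC⟩, hx0⟩)
    exact hxy.ne' (hx _ (mem_image_of_mem φ hy))

theorem ae_eq_zero_of_integral_eq_zero [CompleteSpace E] (hC : (C : ConvexCone ℝ E).Salient)
    {α : Type*} [MeasurableSpace α] {μ : Measure α} {g : α → E} (hg : Integrable g μ)
    (hgC : ∀ᵐ a ∂μ, g a ∈ C) (h0 : ∫ a, g a ∂μ = 0) : g =ᵐ[μ] 0 := by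
  obtain ⟨T, hT, hgT⟩ := hg.aestronglyMeasurable.isSeparable_ae_range
  obtain ⟨s, hs, hsC, hsep⟩ := C.exists_countable_dual_separating hC hT
  have hfg (f : StrongDual ℝ E) (hf : f ∈ s) : ∀ᵐ a ∂μ, f (g a) = 0 := by
    refine (integral_eq_zero_iff_of_nonneg_ae (hgC.mono fun a ha => hsC f hf _ ha)
      (f.integrable_comp hg)).1 ?_
    rw [f.integral_comp_comm hg, h0, map_zero]
  filter_upwards [hgC, hgT, (ae_ball_iff hs).2 hfg] with a haC haT hfa
  exact hsep _ haC haT hfa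

end ProperCone

namespace IsCoupling

variable {Z F : Type*} [MeasurableSpace Z] [NormedAddCommGroup F]
  {r : Measure (Z × Z)} {p q : Measure Z}

theorem integrable_comp_fst (hr : IsCoupling r p q) {f : Z → F} (hf : Integrable f p) :
    Integrable (fun z => f z.1) r := by
  rw [← hr.1] at hf
  exact (integrable_map_measure hf.1 measurable_fst.aemeasurable).1 hf

theorem integrable_comp_snd (hr : IsCoupling r p q) {f : Z → F} (hf : Integrable f q) :
    Integrable (fun z => f z.2) r := by
  rw [← hr.2] at hf
  exact (integrable_map_measure hf.1 measurable_snd.aemeasurable).1 hf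

theorem integral_comp_fst [NormedSpace ℝ F] (hr : IsCoupling r p q) {f : Z → F}
    (hf : AEStronglyMeasurable f p) :
    ∫ z, f z.1 ∂r = ∫ x, f x ∂p := by
  rw [← hr.1] at hf ⊢
  exact (integral_map measurable_fst.aemeasurable hf).symm

theorem integral_comp_snd [NormedSpace ℝ F] (hr : IsCoupling r p q) {f : Z → F}
    (hf : AEStronglyMeasurable f q) :
    ∫ z, f z.2 ∂r = ∫ x, f x ∂q := by
  rw [← hr.2] at hf ⊢
  exact (integral_map measurable_snd.aemeasurable hf).symm

theorem eq_of_fst_ae_eq_snd (hr : IsCoupling r p q) (h : Prod.fst =ᵐ[r] Prod.snd) : p = q := by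
  rw [← hr.1, ← hr.2, Measure.map_congr h]

end IsCoupling

/-- Strict monotonicity of the barycenter on an ordered Banach space (order given by a
closed, convex, pointed positive cone `C`): if `p ≤ q` in the stochastic order and the
barycenters (Bochner integrals) of `p` and `q` coincide, then `p = q`. -/
theorem barycenter_strictly_monotone
    {E : Type*} [NormedAddCommGroup E] [NormedSpace ℝ E] [CompleteSpace E]
    [MeasurableSpace E] [BorelSpace E]
    (C : Set E) (hCcl : IsClosed C) (hC0 : (0 : E) ∈ C)
    (hCadd : ∀ a ∈ C, ∀ b ∈ C, a + b ∈ C)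
    (hCsmul : ∀ t : ℝ, 0 ≤ t → ∀ c ∈ C, t • c ∈ C)
    (hCpointed : ∀ c ∈ C, -c ∈ C → c = 0)
    (p q : Measure E) [IsProbabilityMeasure p] [IsProbabilityMeasure q]
    (hpR : p.InnerRegular) (hqR : q.InnerRegular)
    (hp1 : Integrable (fun x => ‖x‖) p) (hq1 : Integrable (fun x => ‖x‖) q)
    (hcoup : ∃ r : Measure (E × E), IsCoupling r p q ∧ r {z : E × E | z.2 - z.1 ∈ C}ᶜ = 0)
    (hbar : (∫ x, x ∂p) = ∫ x, x ∂q) :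
    p = q := by
  obtain ⟨r, hr, hrC⟩ := hcoup
  let K : ProperCone ℝ E :=
    ⟨⟨⟨⟨C, fun ha hb => hCadd _ ha _ hb⟩, hC0⟩, fun t c hc => hCsmul t t.2 c hc⟩, hCcl⟩
  have hK : (K : ConvexCone ℝ E).Salient := fun c hc hc0 hnc => hc0 (hCpointed c hc hnc)
  have hp : Integrable (fun x => x) p :=
    (integrable_norm_iff (Measure.aestronglyMeasurable_id_of_innerRegular p)).1 hp1
  have hq : Integrable (fun x => x) q :=
    (integrable_norm_iff (Measure.aestronglyMeasurable_id_of_innerRegular q)).1 hq1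
  have hdiff : Integrable (fun z : E × E => z.2 - z.1) r :=
    (hr.integrable_comp_snd hq).sub (hr.integrable_comp_fst hp)
  have hdiff0 : ∫ z, z.2 - z.1 ∂r = 0 := by
    rw [integral_sub (hr.integrable_comp_snd hq) (hr.integrable_comp_fst hp),
      hr.integral_comp_snd hq.1, hr.integral_comp_fst hp.1, hbar, sub_self]
  have hdiffK : ∀ᵐ z ∂r, z.2 - z.1 ∈ K := mem_ae_iff.2 hrC
  have hdiff_ae := K.ae_eq_zero_of_integral_eq_zero hK hdiff hdiffK hdiff0
  exact hr.eq_of_fst_ae_eq_snd (hdiff_ae.mono fun z hz => (sub_eq_zero.1 hz).symm)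
end
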